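/- arXiv:2302.11692 — 2 statements merged into one kernel-verified Lean document; each statement's English description precedes it below -/
import Mathlib

section
/- For every unit vector x ∈ ℝ⁴, the derivative of the Hopf map sends the tangent space of S³ at x onto the tangent plane of the sphere S²(1/2) at ψ(x): every v ∈ ℝ⁴ with ⟨v, x⟩ = 0 satisfies ⟨Dψₓ(v), ψ(x)⟩ = 0, and conversely every w ∈ ℝ³ with ⟨w, ψ(x)⟩ = 0 equals Dψₓ(v) for some v ∈ ℝ⁴ with ⟨v, x⟩ = 0. -/
/-!
`ψ` is quadratic, so `ψ (x + v) - ψ x - J x v = ψ v` for its Jacobian `J x`, and `‖ψ v‖ = ‖v‖² / 2`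
makes this remainder `o(v)`: hence `Dψₓ = J x`. The rows of `J x` are orthogonal of length `‖x‖`,
so `J Jᵀ = ‖x‖² I` and `Jᵀ w` is a preimage of `w` when `‖x‖ = 1`; it is tangent to `S³` because
`⟪Jᵀ w, x⟫ = ⟪w, J x⟫ = 2 ⟪w, ψ x⟫` (Euler). Conversely `⟪J v, ψ x⟫ = ⟪v, Jᵀ ψ x⟫ = (‖x‖² / 2) ⟪v, x⟫`,
as `Jᵀ ψ x` is half the gradient of `‖ψ x‖² = ‖x‖⁴ / 4`.
-/

noncomputable section

/-- The Hopf map `ψ : ℝ⁴ → ℝ³`. -/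
def hopf (x : EuclideanSpace ℝ (Fin 4)) : EuclideanSpace ℝ (Fin 3) :=
  (WithLp.equiv 2 (Fin 3 → ℝ)).symm
    ![x 0 * x 2 + x 1 * x 3, x 1 * x 2 - x 0 * x 3,
      ((x 0) ^ 2 + (x 1) ^ 2 - (x 2) ^ 2 - (x 3) ^ 2) / 2]

open Matrix Asymptotics

theorem hasFDerivAt_of_norm_sub_le_mul_sq {𝕜 E F : Type*} [NontriviallyNormedField 𝕜]
    [NormedAddCommGroup E] [NormedSpace 𝕜 E] [NormedAddCommGroup F] [NormedSpace 𝕜 F]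
    {f : E → F} {f' : E →L[𝕜] F} {x : E} (C : ℝ)
    (h : ∀ v, ‖f (x + v) - f x - f' v‖ ≤ C * ‖v‖ ^ 2) : HasFDerivAt f f' x := by
  rw [hasFDerivAt_iff_isLittleO_nhds_zero]
  refine (IsBigO.of_bound C (Filter.Eventually.of_forall fun v => ?_)).trans_isLittleO
    (isLittleO_norm_pow_id one_lt_two)
  simpa only [norm_pow, norm_norm] using h v

theorem norm_sq_fin_four (x : EuclideanSpace ℝ (Fin 4)) :
    ‖x‖ ^ 2 = x 0 ^ 2 + x 1 ^ 2 + x 2 ^ 2 + x 3 ^ 2 := by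
  simp only [EuclideanSpace.norm_sq_eq, Real.norm_eq_abs, sq_abs, Fin.sum_univ_four]

def hopfJacobian (x : EuclideanSpace ℝ (Fin 4)) : Matrix (Fin 3) (Fin 4) ℝ :=
  !![x 2, x 3, x 0, x 1; -x 3, x 2, x 1, -x 0; x 0, x 1, -x 2, -x 3]

def hopfDeriv (x : EuclideanSpace ℝ (Fin 4)) :
    EuclideanSpace ℝ (Fin 4) →L[ℝ] EuclideanSpace ℝ (Fin 3) :=
  (hopfJacobian x).toEuclideanLin.toContinuousLinearMap

theorem adjoint_hopfDeriv (x : EuclideanSpace ℝ (Fin 4)) :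
    (hopfDeriv x).adjoint = (hopfJacobian x)ᵀ.toEuclideanLin.toContinuousLinearMap := by
  rw [hopfDeriv, ← LinearMap.adjoint_toContinuousLinearMap,
    ← toEuclideanLin_conjTranspose_eq_adjoint, conjTranspose_eq_transpose_of_trivial]

theorem hopf_add_sub_sub_hopfDeriv (x v : EuclideanSpace ℝ (Fin 4)) :
    hopf (x + v) - hopf x - hopfDeriv x v = hopf v := by
  ext i
  fin_cases i <;>
    simp only [hopf, hopfDeriv, hopfJacobian, WithLp.equiv_symm_apply, PiLp.add_apply,
      PiLp.sub_apply, LinearMap.coe_toContinuousLinearMap', ofLp_toLpLin, toLin'_apply,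
      cons_mulVec, empty_mulVec, dotProduct, Fin.sum_univ_four, cons_val_zero, cons_val_one,
      cons_val, Fin.isValue, Fin.zero_eta, Fin.mk_one, Fin.reduceFinMk] <;>
    ring

theorem norm_hopf (v : EuclideanSpace ℝ (Fin 4)) : ‖hopf v‖ = ‖v‖ ^ 2 / 2 := by
  refine (sq_eq_sq₀ (norm_nonneg _) (by positivity)).1 ?_
  rw [norm_sq_fin_four]
  simp only [hopf, WithLp.equiv_symm_apply, EuclideanSpace.norm_sq_eq, Real.norm_eq_abs, sq_abs,
    Fin.sum_univ_three, cons_val_zero, cons_val_one, cons_val, Fin.isValue]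
  ring

theorem hasFDerivAt_hopf (x : EuclideanSpace ℝ (Fin 4)) : HasFDerivAt hopf (hopfDeriv x) x :=
  hasFDerivAt_of_norm_sub_le_mul_sq (1 / 2) fun v => by
    rw [hopf_add_sub_sub_hopfDeriv, norm_hopf, one_div_mul_eq_div]

theorem hopfDeriv_self (x : EuclideanSpace ℝ (Fin 4)) : hopfDeriv x x = (2 : ℝ) • hopf x := by
  ext i
  fin_cases i <;>
    simp only [hopf, hopfDeriv, hopfJacobian, WithLp.equiv_symm_apply, PiLp.smul_apply,
      LinearMap.coe_toContinuousLinearMap', ofLp_toLpLin, toLin'_apply, cons_mulVec, empty_mulVec,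
      dotProduct, Fin.sum_univ_four, cons_val_zero, cons_val_one, cons_val, smul_eq_mul,
      Fin.isValue, Fin.zero_eta, Fin.mk_one, Fin.reduceFinMk] <;>
    ring

theorem adjoint_hopfDeriv_apply_hopf (x : EuclideanSpace ℝ (Fin 4)) :
    (hopfDeriv x).adjoint (hopf x) = (‖x‖ ^ 2 / 2) • x := by
  rw [adjoint_hopfDeriv, norm_sq_fin_four]
  ext i
  fin_cases i <;>
    simp only [hopf, hopfJacobian, WithLp.equiv_symm_apply, PiLp.smul_apply,
      LinearMap.coe_toContinuousLinearMap', toLpLin_toLp, toLin'_apply, mulVec, dotProduct,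
      transpose_apply, of_apply, cons_val', cons_val_zero, cons_val_one, cons_val,
      cons_val_fin_one, Fin.sum_univ_three, smul_eq_mul, Fin.isValue, Fin.zero_eta, Fin.mk_one,
      Fin.reduceFinMk] <;>
    ring

theorem hopfJacobian_mul_transpose (x : EuclideanSpace ℝ (Fin 4)) :
    hopfJacobian x * (hopfJacobian x)ᵀ = ‖x‖ ^ 2 • (1 : Matrix (Fin 3) (Fin 3) ℝ) := by
  rw [norm_sq_fin_four]
  ext i j
  fin_cases i <;> fin_cases j <;>
    simp only [hopfJacobian, mul_apply, of_apply, cons_val', cons_val_fin_one, cons_val_zero,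
      cons_val_one, cons_val, transpose_apply, Fin.sum_univ_four, Matrix.smul_apply,
      one_apply_eq, one_apply_ne, ne_eq, Fin.reduceEq, zero_ne_one, one_ne_zero,
      not_false_eq_true, smul_eq_mul, Fin.isValue, Fin.zero_eta, Fin.mk_one, Fin.reduceFinMk] <;>
    ring

theorem hopfDeriv_apply_adjoint_apply (x : EuclideanSpace ℝ (Fin 4))
    (w : EuclideanSpace ℝ (Fin 3)) : hopfDeriv x ((hopfDeriv x).adjoint w) = ‖x‖ ^ 2 • w := by
  rw [adjoint_hopfDeriv]
  ext i
  simp only [hopfDeriv, LinearMap.coe_toContinuousLinearMap', ofLp_toLpLin, toLin'_apply,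
    mulVec_mulVec, hopfJacobian_mul_transpose, smul_mulVec, one_mulVec, PiLp.smul_apply,
    Pi.smul_apply]

/-- The derivative of the Hopf map sends the tangent space of `S³` at `x` onto the
tangent plane of `S²(1/2)` at `ψ(x)`. -/
theorem hopf_derivative_onto_tangent_plane (x : EuclideanSpace ℝ (Fin 4)) (hx : ‖x‖ = 1) :
    (∀ v : EuclideanSpace ℝ (Fin 4), (inner ℝ v x : ℝ) = 0 →
      (inner ℝ (fderiv ℝ hopf x v) (hopf x) : ℝ) = 0) ∧
    ∀ w : EuclideanSpace ℝ (Fin 3), (inner ℝ w (hopf x) : ℝ) = 0 →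
      ∃ v : EuclideanSpace ℝ (Fin 4), (inner ℝ v x : ℝ) = 0 ∧ fderiv ℝ hopf x v = w := by
  rw [(hasFDerivAt_hopf x).fderiv]
  refine ⟨fun v hv => ?_, fun w hw => ⟨(hopfDeriv x).adjoint w, ?_, ?_⟩⟩
  · rw [← ContinuousLinearMap.adjoint_inner_right, adjoint_hopfDeriv_apply_hopf, inner_smul_right,
      hv, mul_zero]
  · rw [ContinuousLinearMap.adjoint_inner_left, hopfDeriv_self, inner_smul_right, hw, mul_zero]
  · rw [hopfDeriv_apply_adjoint_apply, hx, one_pow, one_smul]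
end
end

section
/- For every unit vector x ∈ ℝ⁴, the two vectors Dψₓ(X₂(x)) and Dψₓ(X₃(x)) form an orthonormal pair in ℝ³ tangent to the sphere S²(1/2) at ψ(x): they are unit vectors, mutually orthogonal, and both orthogonal to ψ(x). -/
noncomputable section

/-- The vector field `X₂(x) = (−x⁴, −x³, x², x¹)` on `ℝ⁴`. -/
def X2 (x : EuclideanSpace ℝ (Fin 4)) : EuclideanSpace ℝ (Fin 4) :=
  (WithLp.equiv 2 (Fin 4 → ℝ)).symm ![-x 3, -x 2, x 1, x 0]

/-- The vector field `X₃(x) = (−x³, x⁴, x¹, −x²)` on `ℝ⁴`. -/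
def X3 (x : EuclideanSpace ℝ (Fin 4)) : EuclideanSpace ℝ (Fin 4) :=
  (WithLp.equiv 2 (Fin 4 → ℝ)).symm ![-x 2, x 3, x 0, -x 1]

/-! Identify `ℝ⁴` with `ℍ` via `q = x¹ + x²i + x³j + x⁴k`. Listing coordinates in the order
`k, j, i`, `ψ(q) = ½ q̄ i q`; moreover `X₂(q) = k q` and `X₃(q) = j q`, so
`Dψ_q(X₂ q) = -q̄ j q` and `Dψ_q(X₃ q) = q̄ k q`. For a unit `q`, `v ↦ q̄ v q` is a rotation of the
imaginary quaternions, and the three vectors are the images of `-j`, `k` and `i/2`.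

In coordinates every claim is a polynomial identity: the norms are Euler's four-square identity,
`‖Dψₓ(X₂ x)‖ = ‖Dψₓ(X₃ x)‖ = ‖x‖²`, and tangency follows from `⟪Dψₓ v, ψ x⟫ = ‖x‖² ⟪x, v⟫ / 2`
together with `X₂ x, X₃ x ⊥ x`. -/

open ContinuousLinearMap
open scoped RealInnerProductSpace

local notation "ℝ⁴" => EuclideanSpace ℝ (Fin 4)

theorem fderiv_piLp_apply {𝕜 ι H : Type*} {E : ι → Type*} [NontriviallyNormedField 𝕜]
    [NormedAddCommGroup H] [NormedSpace 𝕜 H] [∀ i, NormedAddCommGroup (E i)]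
    [∀ i, NormedSpace 𝕜 (E i)] [Fintype ι] {p : ENNReal} [Fact (1 ≤ p)] {f : H → PiLp p E}
    {x : H} (hf : DifferentiableAt 𝕜 f x) (v : H) (i : ι) :
    fderiv 𝕜 f x v i = fderiv 𝕜 (fun y => f y i) x v :=
  (congrArg (· v) ((PiLp.hasFDerivAt_apply p (f x) i).comp x hf.hasFDerivAt).fderiv).symm

theorem differentiable_hopf : Differentiable ℝ hopf :=
  differentiable_euclidean.2 fun i => by
    fin_cases i <;>
      simp only [Fin.zero_eta, Fin.mk_one, Fin.reduceFinMk, hopf, WithLp.equiv_symm_apply,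
        PiLp.toLp_apply, Fin.isValue, Matrix.cons_val] <;>
      fun_prop

theorem fderiv_hopf_apply (x v : ℝ⁴) :
    fderiv ℝ hopf x v = !₂[x 0 * v 2 + v 0 * x 2 + x 1 * v 3 + v 1 * x 3,
      x 1 * v 2 + v 1 * x 2 - x 0 * v 3 - v 0 * x 3,
      x 0 * v 0 + x 1 * v 1 - x 2 * v 2 - x 3 * v 3] := by
  have hproj (j : Fin 4) : HasFDerivAt (fun y : ℝ⁴ => y j) _ x :=
    PiLp.hasFDerivAt_apply (𝕜 := ℝ) 2 x j
  have h0 : HasFDerivAt (fun y => hopf y 0) _ x :=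
    ((hproj 0).mul (hproj 2)).add ((hproj 1).mul (hproj 3))
  have h1 : HasFDerivAt (fun y => hopf y 1) _ x :=
    ((hproj 1).mul (hproj 2)).sub ((hproj 0).mul (hproj 3))
  have h2 : HasFDerivAt (fun y => hopf y 2) _ x :=
    ((((hproj 0).pow 2).add ((hproj 1).pow 2)).sub ((hproj 2).pow 2)).sub ((hproj 3).pow 2)
      |>.mul_const 2⁻¹
  ext i
  rw [fderiv_piLp_apply (differentiable_hopf x)]
  fin_cases i <;>
    simp only [Fin.zero_eta, Fin.mk_one, Fin.reduceFinMk, h0.fderiv, h1.fderiv, h2.fderiv,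
      add_apply, sub_apply, smul_apply, PiLp.proj_apply, smul_eq_mul, nsmul_eq_mul, Fin.isValue,
      Matrix.cons_val] <;>
    ring

theorem fderiv_hopf_X2 (x : ℝ⁴) :
    fderiv ℝ hopf x (X2 x) = !₂[2 * (x 0 * x 1 - x 2 * x 3),
      x 1 ^ 2 + x 3 ^ 2 - x 0 ^ 2 - x 2 ^ 2, -2 * (x 0 * x 3 + x 1 * x 2)] := by
  rw [fderiv_hopf_apply]
  ext i
  fin_cases i <;>
    simp only [Fin.zero_eta, Fin.mk_one, Fin.reduceFinMk, X2, WithLp.equiv_symm_apply,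
      PiLp.toLp_apply, Fin.isValue, Matrix.cons_val] <;>
    ring

theorem fderiv_hopf_X3 (x : ℝ⁴) :
    fderiv ℝ hopf x (X3 x) = !₂[x 0 ^ 2 + x 3 ^ 2 - x 1 ^ 2 - x 2 ^ 2,
      2 * (x 0 * x 1 + x 2 * x 3), 2 * (x 1 * x 3 - x 0 * x 2)] := by
  rw [fderiv_hopf_apply]
  ext i
  fin_cases i <;>
    simp only [Fin.zero_eta, Fin.mk_one, Fin.reduceFinMk, X3, WithLp.equiv_symm_apply,
      PiLp.toLp_apply, Fin.isValue, Matrix.cons_val] <;>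
    ring

theorem norm_sq_euclidean_fin_four (x : ℝ⁴) :
    ‖x‖ ^ 2 = x 0 ^ 2 + x 1 ^ 2 + x 2 ^ 2 + x 3 ^ 2 := by
  simp [EuclideanSpace.norm_sq_eq, Fin.sum_univ_four]

theorem norm_sq_euclidean_fin_three (a b c : ℝ) : ‖!₂[a, b, c]‖ ^ 2 = a ^ 2 + b ^ 2 + c ^ 2 := by
  simp [EuclideanSpace.norm_sq_eq, Fin.sum_univ_three]

theorem norm_fderiv_hopf_X2 (x : ℝ⁴) : ‖fderiv ℝ hopf x (X2 x)‖ = ‖x‖ ^ 2 := by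
  rw [← pow_left_inj₀ (norm_nonneg _) (by positivity) two_ne_zero, fderiv_hopf_X2,
    norm_sq_euclidean_fin_three, norm_sq_euclidean_fin_four]
  ring

theorem norm_fderiv_hopf_X3 (x : ℝ⁴) : ‖fderiv ℝ hopf x (X3 x)‖ = ‖x‖ ^ 2 := by
  rw [← pow_left_inj₀ (norm_nonneg _) (by positivity) two_ne_zero, fderiv_hopf_X3,
    norm_sq_euclidean_fin_three, norm_sq_euclidean_fin_four]
  ring

theorem inner_fderiv_hopf_X2_X3 (x : ℝ⁴) :
    ⟪fderiv ℝ hopf x (X2 x), fderiv ℝ hopf x (X3 x)⟫ = 0 := by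
  rw [fderiv_hopf_X2, fderiv_hopf_X3]
  simp only [PiLp.inner_apply, RCLike.inner_apply, conj_trivial, Fin.sum_univ_three,
    Fin.isValue, Matrix.cons_val]
  ring

theorem inner_fderiv_hopf_apply_hopf (x v : ℝ⁴) :
    ⟪fderiv ℝ hopf x v, hopf x⟫ = ‖x‖ ^ 2 * ⟪x, v⟫ / 2 := by
  rw [fderiv_hopf_apply, norm_sq_euclidean_fin_four]
  simp only [hopf, WithLp.equiv_symm_apply, PiLp.inner_apply, RCLike.inner_apply, conj_trivial,
    Fin.sum_univ_three, Fin.sum_univ_four, Fin.isValue, Matrix.cons_val]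
  ring

theorem inner_X2_eq_zero (x : ℝ⁴) : ⟪x, X2 x⟫ = 0 := by
  simp only [X2, WithLp.equiv_symm_apply, PiLp.inner_apply, RCLike.inner_apply, conj_trivial,
    Fin.sum_univ_four, Fin.isValue, Matrix.cons_val]
  ring

theorem inner_X3_eq_zero (x : ℝ⁴) : ⟪x, X3 x⟫ = 0 := by
  simp only [X3, WithLp.equiv_symm_apply, PiLp.inner_apply, RCLike.inner_apply, conj_trivial,
    Fin.sum_univ_four, Fin.isValue, Matrix.cons_val]
  ring

/-- For every unit `x`, `Dψₓ(X₂(x))` and `Dψₓ(X₃(x))` form an orthonormal pair in `ℝ³`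
tangent to the sphere `S²(1/2)` at `ψ(x)`. -/
theorem hopf_pushforward_orthonormal (x : EuclideanSpace ℝ (Fin 4)) (hx : ‖x‖ = 1) :
    ‖fderiv ℝ hopf x (X2 x)‖ = 1 ∧ ‖fderiv ℝ hopf x (X3 x)‖ = 1 ∧
    (inner ℝ (fderiv ℝ hopf x (X2 x)) (fderiv ℝ hopf x (X3 x)) : ℝ) = 0 ∧
    (inner ℝ (fderiv ℝ hopf x (X2 x)) (hopf x) : ℝ) = 0 ∧
    (inner ℝ (fderiv ℝ hopf x (X3 x)) (hopf x) : ℝ) = 0 := by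
  refine ⟨?_, ?_, inner_fderiv_hopf_X2_X3 x, ?_, ?_⟩
  · rw [norm_fderiv_hopf_X2, hx, one_pow]
  · rw [norm_fderiv_hopf_X3, hx, one_pow]
  · rw [inner_fderiv_hopf_apply_hopf, inner_X2_eq_zero, mul_zero, zero_div]
  · rw [inner_fderiv_hopf_apply_hopf, inner_X3_eq_zero, mul_zero, zero_div]
end
end
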